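/- arXiv:1503.06514 — 7 statements merged into one kernel-verified Lean document; each statement's English description precedes it below -/
import Mathlib

section
/- Let R be a transitive well-founded relation on a set A, and let RK denote the ordinal-valued R-rank function (RK(t) = sup{RK(x)+1 : x R t}). Then for all x, y ∈ A: (1) if x R y then RK(x) < RK(y); and (2) if RK(x) < RK(y) then there exists z ∈ A with RK(z) = RK(x) and z R y. -/
theorem WellFounded.exists_rank_eq_and_rel_of_lt_rank {α : Type*} {r : α → α → Prop}
    [IsTrans α r] (hwf : WellFounded r) {o : Ordinal} {b : α}
    (ho : o < (hwf.apply b).rank) : ∃ a, (hwf.apply a).rank = o ∧ r a b := by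
  induction b using hwf.induction with
  | _ b ih =>
    rw [Acc.rank_eq, Ordinal.lt_iSup_iff] at ho
    obtain ⟨⟨a, hab⟩, hoa⟩ := ho
    rcases (Order.lt_succ_iff.mp hoa).eq_or_lt with rfl | hlt
    · exact ⟨a, rfl, hab⟩
    · obtain ⟨c, hc, hca⟩ := ih a hab hlt
      exact ⟨c, hc, _root_.trans hca hab⟩

set_option linter.deprecated false in
/-- For a transitive well-founded relation `R` with rank function `RK`:
(1) `x R y` implies `RK x < RK y`; (2) `RK x < RK y` implies there is `z` with
`RK z = RK x` and `z R y`. -/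
theorem rank_lt_iff_exists_rel {A : Type*} (R : A → A → Prop)
    (htrans : Transitive R) (hwf : WellFounded R) (x y : A) :
    (R x y → (hwf.apply x).rank < (hwf.apply y).rank) ∧
      ((hwf.apply x).rank < (hwf.apply y).rank → ∃ z : A, (hwf.apply z).rank = (hwf.apply x).rank ∧ R z y) :=
  have : IsTrans A R := ⟨fun _ _ _ => @htrans _ _ _⟩
  ⟨(hwf.apply y).rank_lt_of_rel, hwf.exists_rank_eq_and_rel_of_lt_rank⟩
end

section
/- Let R be a strict partial order (irreflexive and transitive relation) on a set A. Then the following are equivalent: (1) R is well-founded and A has no infinite totally unordered subset under R; (2) every strict linear extension of R on A is a well ordering of A (i.e., every strict total order L on A with R ⊆ L is well-founded). -/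
/-!
With `≤` the reflexive closure of `R`, condition (1) says, by Ramsey's theorem, exactly that `≤`
is a well-quasi-order: every sequence `f` has `m < n` with `f m ≤ f n`. A descending sequence of
a linear extension admits no such pair, so wqo implies (2).
Conversely, a sequence without such a pair can be made descending: adjoining `f m < f n` for
`n < m` keeps the order strict, since `f n ≤ y ≤ f m` forces `m ≤ n`, and Szpilrajn's theorem
extends the result to a linear extension that is not well-founded.
-/

theorem isStrictTotalOrder_iff {α : Type*} {r : α → α → Prop} :
    IsStrictTotalOrder α r ↔ (∀ x, ¬ r x x) ∧ (∀ ⦃x y z⦄, r x y → r y z → r x z) ∧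
      ∀ x y, r x y ∨ x = y ∨ r y x := by
  refine ⟨fun _ => ⟨irrefl, fun _ _ _ => _root_.trans, trichotomous⟩,
    fun ⟨hirr, htrans, htri⟩ => ?_⟩
  have : Std.Trichotomous r :=
    ⟨fun x y hxy hyx => ((htri x y).resolve_left hxy).resolve_right hyx⟩
  have : IsStrictOrder α r := { irrefl := hirr, trans := fun _ _ _ => @htrans _ _ _ }
  exact {}

theorem exists_isStrictTotalOrder_extension {α : Type*} (r : α → α → Prop) [IsStrictOrder α r] :
    ∃ s, IsStrictTotalOrder α s ∧ r ≤ s := by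
  let := partialOrderOfSO r
  refine ⟨fun a b => toLinearExtension a < toLinearExtension b,
    inferInstanceAs (IsStrictTotalOrder (LinearExtension α) (· < ·)), fun a b hab => ?_⟩
  exact (toLinearExtension.monotone (Or.inr hab)).lt_of_ne (show a < b from hab).ne

section PartialOrder

variable {α : Type*} [PartialOrder α]

/-- `<` with the relations `f m < f n` for `n < m` adjoined, closed under composition with `≤`
on both sides. -/
def adjoinDescending (f : ℕ → α) (x y : α) : Prop :=
  x < y ∨ ∃ m n, n < m ∧ x ≤ f m ∧ f n ≤ y

theorem isStrictOrder_adjoinDescending {f : ℕ → α} (hf : ∀ m n, m < n → ¬ f m ≤ f n) :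
    IsStrictOrder α (adjoinDescending f) := by
  have hle {m n y} (h₁ : f n ≤ y) (h₂ : y ≤ f m) : m ≤ n :=
    not_lt.1 fun h => hf n m h (h₁.trans h₂)
  refine { irrefl := ?_, trans := ?_ }
  · rintro x (hx | ⟨m, n, hnm, hxm, hnx⟩)
    · exact lt_irrefl x hx
    · exact (hle hnx hxm).not_gt hnm
  · rintro x y z (hxy | ⟨m, n, hnm, hxm, hny⟩) (hyz | ⟨m', n', hnm', hym', hnz⟩)
    · exact Or.inl (hxy.trans hyz)
    · exact Or.inr ⟨m', n', hnm', hxy.le.trans hym', hnz⟩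
    · exact Or.inr ⟨m, n, hnm, hxm, hny.trans hyz.le⟩
    · exact Or.inr ⟨m, n', hnm'.trans ((hle hny hym').trans_lt hnm), hxm, hnz⟩

theorem exists_isStrictTotalOrder_extension_descending_of_forall_not_le {f : ℕ → α}
    (hf : ∀ m n, m < n → ¬ f m ≤ f n) :
    ∃ s, IsStrictTotalOrder α s ∧ (· < ·) ≤ s ∧ ∀ n, s (f (n + 1)) (f n) := by
  have := isStrictOrder_adjoinDescending hf
  obtain ⟨s, hs, hle⟩ := exists_isStrictTotalOrder_extension (adjoinDescending f)
  exact ⟨s, hs, fun x y h => hle x y (Or.inl h),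
    fun n => hle _ _ (Or.inr ⟨n + 1, n, n.lt_succ_self, le_rfl, le_rfl⟩)⟩

theorem WellQuasiOrderedLE.wellFounded_of_lt_le [WellQuasiOrderedLE α] {s : α → α → Prop}
    [IsStrictOrder α s] (hs : (· < ·) ≤ s) : WellFounded s := by
  refine RelEmbedding.wellFounded_iff_isEmpty.2 ⟨fun g => ?_⟩
  obtain ⟨m, n, hmn, hle⟩ := wellQuasiOrdered_le g
  have hdesc : s (g n) (g m) := g.map_rel_iff.2 hmn
  rcases hle.lt_or_eq with hlt | heq
  · exact asymm hdesc (hs _ _ hlt)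
  · exact irrefl _ (heq ▸ hdesc)

theorem wellQuasiOrderedLE_iff_forall_isStrictTotalOrder_wellFounded :
    WellQuasiOrderedLE α ↔
      ∀ s : α → α → Prop, IsStrictTotalOrder α s → (· < ·) ≤ s → WellFounded s := by
  refine ⟨fun _ _ _ => WellQuasiOrderedLE.wellFounded_of_lt_le, fun h => ⟨fun f => ?_⟩⟩
  by_contra! hf
  obtain ⟨s, hs, hlt, hdesc⟩ := exists_isStrictTotalOrder_extension_descending_of_forall_not_le hf
  exact (RelEmbedding.natGT f hdesc).not_wellFounded (h s hs hlt)

end PartialOrder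

/-- For a strict partial order `R` on `A`: `R` is well-founded with no infinite antichain
iff every strict linear extension of `R` is a well ordering (well-founded strict total order). -/
theorem pwo_no_infinite_antichain_iff_every_linear_extension_well_ordered
    {A : Type*} (R : A → A → Prop) (hirr : ∀ x : A, ¬ R x x) (htrans : Transitive R) :
    (WellFounded R ∧
        ¬ ∃ B : Set A, B.Infinite ∧ ∀ x ∈ B, ∀ y ∈ B, x ≠ y → ¬ R x y ∧ ¬ R y x) ↔
      ∀ L : A → A → Prop, (∀ x y : A, R x y → L x y) →
        (∀ x : A, ¬ L x x) → Transitive L → (∀ x y : A, L x y ∨ x = y ∨ L y x) →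
        WellFounded L := by
  have : IsStrictOrder A R := { irrefl := hirr, trans := fun _ _ _ => @htrans _ _ _ }
  let := partialOrderOfSO R
  have hanti (B : Set A) :
      IsAntichain (· ≤ ·) B ↔ ∀ x ∈ B, ∀ y ∈ B, x ≠ y → ¬ R x y ∧ ¬ R y x := by
    rw [isAntichain_iff_forall_not_lt]
    exact ⟨fun h x hx y hy _ => ⟨h hx hy, h hy hx⟩,
      fun h x hx y hy hxy => (h x hx y hy hxy.ne).1 hxy⟩
  calc _ ↔ WellFoundedLT A ∧ ∀ B : Set A, IsAntichain (· ≤ ·) B → B.Finite := by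
        refine and_congr (isWellFounded_iff A (· < ·)).symm ?_
        simp only [hanti, not_exists, not_and, ← Set.not_infinite]
        exact forall_congr' fun B => imp_not_comm
    _ ↔ WellQuasiOrderedLE A := wellQuasiOrderedLE_iff.symm
    _ ↔ ∀ L : A → A → Prop, IsStrictTotalOrder A L → (· < ·) ≤ L → WellFounded L :=
        wellQuasiOrderedLE_iff_forall_isStrictTotalOrder_wellFounded
    _ ↔ _ := forall_congr' fun L => by
        rw [isStrictTotalOrder_iff, and_imp, and_imp]
        exact ⟨fun h hRL hirr htrans htri => h hirr htrans htri hRL,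
          fun h hirr htrans htri hRL => h hRL hirr htrans htri⟩
end

section
/- Let R be a transitive well-founded relation on a set A such that A has no infinite totally unordered subset under R. Then every strict linear extension of R is a well ordering of A: for every strict total order L on A with R ⊆ L, the relation L is well-founded. -/
/-- If `R` is a transitive well-founded relation on `A` with no infinite totally unordered
subset, then every strict linear extension of `R` is well-founded (a well ordering of `A`). -/
theorem every_linear_extension_well_ordered_of_pwo_no_infinite_antichain
    {A : Type*} (R : A → A → Prop) (htrans : Transitive R) (hwf : WellFounded R)
    (hnoanti : ¬ ∃ B : Set A, B.Infinite ∧ ∀ x ∈ B, ∀ y ∈ B, x ≠ y → ¬ R x y ∧ ¬ R y x) :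
    ∀ L : A → A → Prop, (∀ x y : A, R x y → L x y) →
      (∀ x : A, ¬ L x x) → Transitive L → (∀ x y : A, L x y ∨ x = y ∨ L y x) →
      WellFounded L := by
  intro L hRL hirr htransL _
  haveI : IsIrrefl A L := ⟨hirr⟩
  haveI : IsTrans A L := ⟨fun a b c hab hbc => htransL hab hbc⟩
  haveI : IsStrictOrder A L := ⟨⟩
  rw [RelEmbedding.wellFounded_iff_isEmpty]
  constructor
  intro e
  set f : ℕ → A := fun n => e n with hf
  have hdesc : ∀ m n : ℕ, m < n → L (f n) (f m) := fun m n h => e.map_rel_iff.2 h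
  -- for m < n, ¬ R (f m) (f n)
  have hnR : ∀ m n : ℕ, m < n → ¬ R (f m) (f n) := by
    intro m n h hR
    exact hirr _ (htransL (hdesc m n h) (hRL _ _ hR))
  have hinj : Function.Injective f := by
    intro m n h
    rcases lt_trichotomy m n with hc | hc | hc
    · exact absurd (hdesc m n hc) (h ▸ hirr _)
    · exact hc
    · exact absurd (hdesc n m hc) (h ▸ hirr _)
  have hinj' : ∀ m n : ℕ, f m = f n → m = n := fun m n h => hinj h
  set S : Set ℕ := {n | ∀ m, n < m → ¬ R (f m) (f n)} with hS
  by_cases hSinf : S.Infinite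
  · -- infinite antichain
    apply hnoanti
    refine ⟨f '' S, hSinf.image (hinj.injOn), ?_⟩
    rintro x ⟨m, hm, rfl⟩ y ⟨n, hn, rfl⟩ hne
    rcases lt_trichotomy m n with hc | hc | hc
    · exact ⟨hnR m n hc, hm n hc⟩
    · exact absurd (congrArg f hc) hne
    · exact ⟨hn m hc, hnR n m hc⟩
  · -- infinite R-descending sequence
    rw [Set.not_infinite] at hSinf
    obtain ⟨N, hN⟩ : ∃ N, ∀ n, N ≤ n → n ∉ S := by
      rcases hSinf.bddAbove with ⟨N, hNb⟩
      exact ⟨N + 1, fun n hn hnS => by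
        have := hNb hnS; omega⟩
    have hstep : ∀ n, N ≤ n → ∃ m, n < m ∧ R (f m) (f n) := by
      intro n hn
      have := hN n hn
      simp only [hS, Set.mem_setOf_eq, not_forall] at this
      obtain ⟨m, hm, hR⟩ := this
      exact ⟨m, hm, not_not.1 hR⟩
    -- build g : ℕ → ℕ
    have key : ∀ n : ℕ, N ≤ n → ∃ m, N ≤ m ∧ R (f m) (f n) := by
      intro n hn
      obtain ⟨m, hm1, hm2⟩ := hstep n hn
      exact ⟨m, le_trans hn hm1.le, hm2⟩
    choose g hg1 hg2 using key
    let seq : ℕ → {n : ℕ // N ≤ n} := fun k =>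
      Nat.rec ⟨N, le_refl N⟩ (fun _ p => ⟨g p.1 p.2, hg1 p.1 p.2⟩) k
    have hseq : ∀ k, R (f (seq (k + 1)).1) (f (seq k).1) := fun k => hg2 _ _
    obtain ⟨a, ⟨k, hk⟩, hmin⟩ := hwf.has_min (Set.range fun k => f (seq k).1)
      ⟨f (seq 0).1, 0, rfl⟩
    exact hmin _ ⟨k + 1, rfl⟩ (hk ▸ hseq k)
end

section
/- Let R be a strict partial order (irreflexive and transitive relation) on a set A, and suppose that every strict linear extension of R is a well ordering of A (every strict total order L on A with R ⊆ L is well-founded). Then R is well-founded and A has no infinite totally unordered subset under R. -/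
/-!
By Szpilrajn, `R` extends to a strict total order, which is well-founded by hypothesis, hence so
is `R`. An infinite antichain `g 0, g 1, …` of `R` can be ordered backwards,
`g (n + 1) ≺ g n`: adjoining these relations and closing under composition with `R` stays a
strict partial order, because no element lies `R`-between two distinct members of an antichain.
A linear extension of the enlarged order then contains an infinite descending chain.
-/

open Relation

section

variable {A ι : Type*}

theorem exists_isStrictTotalOrder_extension_s10 (R : A → A → Prop) [IsStrictOrder A R] :
    ∃ L : A → A → Prop, R ≤ L ∧ IsStrictTotalOrder A L := by
  let := partialOrderOfSO R
  refine ⟨fun x y => toLinearExtension x < toLinearExtension y, fun x y h => ?_, ?_⟩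
  · exact toLinearExtension.monotone.strictMono_of_injective (fun _ _ h => h) h
  · exact (inferInstance : IsStrictTotalOrder (LinearExtension A) (· < ·))

theorem IsAntichain.eq_of_reflGen {R : A → A → Prop} {B : Set A} (hB : IsAntichain R B)
    {x y : A} (hx : x ∈ B) (hy : y ∈ B) (h : ReflGen R x y) : x = y := by
  rcases h with _ | h
  · rfl
  · exact hB.eq hx hy h

def extendAlong (R : A → A → Prop) (g : ι → A) (S : ι → ι → Prop) (x y : A) : Prop :=
  R x y ∨ ∃ i j, S i j ∧ ReflGen R x (g i) ∧ ReflGen R (g j) y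

theorem isStrictOrder_extendAlong (R : A → A → Prop) [IsStrictOrder A R] {g : ι → A}
    (S : ι → ι → Prop) [IsStrictOrder ι S] (hg : ∀ i j, ReflGen R (g i) (g j) → i = j) :
    IsStrictOrder A (extendAlong R g S) := by
  have sandwich : ∀ {i j x}, ReflGen R (g j) x → ReflGen R x (g i) → j = i :=
    fun hj hi => hg _ _ (_root_.trans hj hi)
  refine { irrefl := ?_, trans := ?_ }
  · rintro x (h | ⟨i, j, hij, hx, hx'⟩)
    · exact irrefl x h
    · exact irrefl i (sandwich hx' hx ▸ hij)
  · rintro x y z (hxy | ⟨i, j, hij, hx, hy⟩) (hyz | ⟨k, l, hkl, hy', hz⟩)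
    · exact Or.inl (_root_.trans hxy hyz)
    · exact Or.inr ⟨k, l, hkl, _root_.trans (ReflGen.single hxy) hy', hz⟩
    · exact Or.inr ⟨i, j, hij, hx, _root_.trans hy (ReflGen.single hyz)⟩
    · exact Or.inr ⟨i, l, _root_.trans hij (sandwich hy hy' ▸ hkl), hx, hz⟩

theorem exists_not_wellFounded_extension_of_infinite_antichain (R : A → A → Prop)
    [IsStrictOrder A R] {B : Set A} (hB : IsAntichain R B) (hinf : B.Infinite) :
    ∃ L : A → A → Prop, R ≤ L ∧ IsStrictTotalOrder A L ∧ ¬ WellFounded L := by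
  let e := Set.Infinite.natEmbedding B hinf
  let g : ℕ → A := fun n => e n
  have hg : ∀ m n, ReflGen R (g m) (g n) → m = n := fun m n h =>
    e.injective (Subtype.ext (hB.eq_of_reflGen (e m).2 (e n).2 h))
  have := isStrictOrder_extendAlong R (· > ·) hg
  obtain ⟨L, hRL, hL⟩ := exists_isStrictTotalOrder_extension_s10 (extendAlong R g (· > ·))
  have hdesc : ∀ n, L (g (n + 1)) (g n) := fun n =>
    hRL _ _ (Or.inr ⟨n + 1, n, n.lt_succ_self, ReflGen.refl, ReflGen.refl⟩)
  refine ⟨L, fun x y h => hRL x y (Or.inl h), hL, fun hwf => ?_⟩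
  exact (wellFounded_iff_isEmpty_descending_chain.1 hwf).false ⟨g, hdesc⟩

end

/-- If every strict linear extension of a strict partial order `R` on `A` is well-founded,
then `R` is well-founded and `A` has no infinite totally unordered subset under `R`. -/
theorem pwo_no_infinite_antichain_of_every_linear_extension_well_ordered
    {A : Type*} (R : A → A → Prop) (hirr : ∀ x : A, ¬ R x x) (htrans : Transitive R)
    (hext : ∀ L : A → A → Prop, (∀ x y : A, R x y → L x y) →
      (∀ x : A, ¬ L x x) → Transitive L → (∀ x y : A, L x y ∨ x = y ∨ L y x) →
      WellFounded L) :
    WellFounded R ∧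
      ¬ ∃ B : Set A, B.Infinite ∧ ∀ x ∈ B, ∀ y ∈ B, x ≠ y → ¬ R x y ∧ ¬ R y x := by
  have : IsStrictOrder A R := { irrefl := hirr, trans := fun _ _ _ h h' => htrans h h' }
  have wf_of_extension : ∀ L, R ≤ L → IsStrictTotalOrder A L → WellFounded L := fun L hRL _ =>
    hext L hRL (irrefl_of L) (fun _ _ _ => trans_of L) (trichotomous_of L)
  constructor
  · obtain ⟨L, hRL, hL⟩ := exists_isStrictTotalOrder_extension_s10 R
    exact Subrelation.wf (hRL _ _) (wf_of_extension L hRL hL)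
  · rintro ⟨B, hinf, hB⟩
    have hanti : IsAntichain R B := fun x hx y hy hxy => (hB x hx y hy hxy).1
    obtain ⟨L, hRL, hL, hnwf⟩ := exists_not_wellFounded_extension_of_infinite_antichain R hanti hinf
    exact hnwf (wf_of_extension L hRL hL)
end

section
/- Let R be a strict partial order (irreflexive and transitive relation) on a set A, and suppose A has a countably infinite totally unordered subset D under R. Then there exists a strict linear extension L of R on A that is not well-founded (hence not a well ordering of A). -/
/-- If a strict partial order `R` on `A` has a countably infinite totally unordered subset `D`,
then `R` has a strict linear extension `L` that is not well-founded. -/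
theorem exists_non_well_founded_linear_extension_of_countable_antichain
    {A : Type*} (R : A → A → Prop) (hirr : ∀ x : A, ¬ R x x) (htrans : Transitive R)
    (D : Set A) (hcount : D.Countable) (hinf : D.Infinite)
    (hanti : ∀ x ∈ D, ∀ y ∈ D, x ≠ y → ¬ R x y ∧ ¬ R y x) :
    ∃ L : A → A → Prop, (∀ x y : A, R x y → L x y) ∧
      (∀ x : A, ¬ L x x) ∧ Transitive L ∧ (∀ x y : A, L x y ∨ x = y ∨ L y x) ∧
      ¬ WellFounded L := by
  classical
  -- an injective sequence inside D
  set f : ℕ ↪ D := hinf.natEmbedding D with hf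
  set e : ℕ → A := fun n => (f n : A) with he
  have heD : ∀ n, e n ∈ D := fun n => (f n).2
  have hei : Function.Injective e := fun m n h => by
    have := Subtype.ext h
    exact f.injective this
  have heR : ∀ {m n : ℕ}, ¬ R (e m) (e n) := by
    intro m n h
    rcases eq_or_ne m n with rfl | hne
    · exact hirr _ h
    · exact (hanti _ (heD m) _ (heD n) (fun hh => hne (hei hh))).1 h
  -- base relation: R plus a descending chain on e
  set S : A → A → Prop := fun x y => R x y ∨ ∃ n m : ℕ, m < n ∧ x = e n ∧ y = e m with hS
  -- closure candidate
  set T : A → A → Prop := fun x y => R x y ∨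
      ∃ n m : ℕ, m < n ∧ (x = e n ∨ R x (e n)) ∧ (y = e m ∨ R (e m) y) with hT
  have hST : ∀ x y, S x y → T x y := by
    rintro x y (h | ⟨n, m, hmn, rfl, rfl⟩)
    · exact Or.inl h
    · exact Or.inr ⟨n, m, hmn, Or.inl rfl, Or.inl rfl⟩
  have hTtrans : ∀ x y z, T x y → T y z → T x z := by
    rintro x y z (hxy | ⟨n, m, hmn, hx, hy⟩) (hyz | ⟨l, k, hkl, hy', hz⟩)
    · exact Or.inl (htrans hxy hyz)
    · refine Or.inr ⟨l, k, hkl, Or.inr ?_, hz⟩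
      rcases hy' with rfl | h
      · exact hxy
      · exact htrans hxy h
    · refine Or.inr ⟨n, m, hmn, hx, Or.inr ?_⟩
      rcases hy with rfl | h
      · exact hyz
      · exact htrans h hyz
    · -- middle element y : must be equality on both sides
      rcases hy with rfl | h
      · rcases hy' with heq | h'
        · -- e m = e l, so m = l
          have : m = l := hei heq
          subst this
          exact Or.inr ⟨n, k, lt_trans hkl hmn, hx, hz⟩
        · exact absurd h' heR
      · rcases hy' with rfl | h'
        · exact absurd h heR
        · exact absurd (htrans h h') heR
  have hTirr : ∀ x, ¬ T x x := by
    rintro x (h | ⟨n, m, hmn, hx, hy⟩)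
    · exact hirr _ h
    · rcases hx with rfl | h
      · rcases hy with heq | h'
        · exact absurd (hei heq) (Nat.ne_of_lt hmn).symm
        · exact heR h'
      · rcases hy with rfl | h'
        · exact heR h
        · exact heR (htrans h' h)
  -- transitive closure of S
  set S' : A → A → Prop := Relation.TransGen S with hS'
  have hS'T : ∀ x y, S' x y → T x y := by
    intro x y h
    induction h with
    | single h => exact hST _ _ h
    | tail _ h2 ih => exact hTtrans _ _ _ ih (hST _ _ h2)
  have hS'irr : ∀ x, ¬ S' x x := fun x h => hTirr x (hS'T _ _ h)
  have hS'trans : Transitive S' := fun _ _ _ => Relation.TransGen.trans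
  have hRS' : ∀ x y, R x y → S' x y := fun x y h =>
    Relation.TransGen.single (Or.inl h)
  have hchain : ∀ n : ℕ, S' (e (n + 1)) (e n) := fun n =>
    Relation.TransGen.single (Or.inr ⟨n + 1, n, Nat.lt_succ_self n, rfl, rfl⟩)
  -- extend the partial order (reflexive closure of S') to a linear order
  set r : A → A → Prop := fun x y => x = y ∨ S' x y with hr
  haveI : IsPartialOrder A r :=
    { refl := fun x => Or.inl rfl
      trans := by
        rintro x y z (rfl | h) (rfl | h')
        · exact Or.inl rfl
        · exact Or.inr h'
        · exact Or.inr h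
        · exact Or.inr (hS'trans h h')
      antisymm := by
        rintro x y (rfl | h) (h' | h'')
        · rfl
        · rfl
        · exact h'.symm
        · exact absurd (hS'trans h h'') (hS'irr x) }
  obtain ⟨s, hs, hrs⟩ := extend_partialOrder r
  set L : A → A → Prop := fun x y => s x y ∧ x ≠ y with hL
  have hs_total := hs.total
  have hs_trans : Transitive s := hs.trans
  have hs_antisymm : ∀ {x y}, s x y → s y x → x = y := fun h h' => hs.antisymm _ _ h h'
  refine ⟨L, ?_, ?_, ?_, ?_, ?_⟩
  · intro x y h
    refine ⟨hrs _ _ (Or.inr (hRS' _ _ h)), ?_⟩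
    rintro rfl; exact hirr _ h
  · rintro x ⟨_, h⟩; exact h rfl
  · rintro x y z ⟨h1, h2⟩ ⟨h3, h4⟩
    refine ⟨hs_trans h1 h3, ?_⟩
    rintro rfl
    exact h2 (hs_antisymm h1 h3)
  · intro x y
    rcases eq_or_ne x y with rfl | hne
    · exact Or.inr (Or.inl rfl)
    · rcases hs_total x y with h | h
      · exact Or.inl ⟨h, hne⟩
      · exact Or.inr (Or.inr ⟨h, hne.symm⟩)
  · intro hwf
    obtain ⟨a, ⟨n, rfl⟩, hmin⟩ := hwf.has_min (Set.range e) ⟨e 0, 0, rfl⟩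
    refine hmin (e (n + 1)) ⟨n + 1, rfl⟩ ?_
    refine ⟨hrs _ _ (Or.inr (hchain n)), ?_⟩
    intro h
    exact hS'irr _ (h ▸ hchain n)
end

section
/- Let R be a transitive well-founded relation on a set A, let L be a strict linear extension of R, and suppose there is a function f : ℕ → A with f(n+1) L f(n) for all n (an infinite L-descending chain). Then A has an infinite totally unordered subset under R; more precisely, there exists an injective function g : ℕ → A whose range is contained in the range of f and whose values are pairwise R-incomparable. -/
/-- If `R` is a transitive well-founded relation, `L` a strict linear extension of `R`, and
`f : ℕ → A` an infinite `L`-descending chain, then there is an injective `g : ℕ → A` whose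
range lies in the range of `f` and whose values are pairwise `R`-incomparable (so `A` has
an infinite totally unordered subset under `R`). -/
theorem antichain_of_descending_chain_in_linear_extension
    {A : Type*} (R : A → A → Prop) (htrans : Transitive R) (hwf : WellFounded R)
    (L : A → A → Prop) (hext : ∀ x y : A, R x y → L x y)
    (hLirr : ∀ x : A, ¬ L x x) (hLtrans : Transitive L)
    (hLtri : ∀ x y : A, L x y ∨ x = y ∨ L y x)
    (f : ℕ → A) (hf : ∀ n : ℕ, L (f (n + 1)) (f n)) :
    ∃ g : ℕ → A, Function.Injective g ∧ (∀ n : ℕ, g n ∈ Set.range f) ∧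
      ∀ i j : ℕ, i ≠ j → ¬ R (g i) (g j) ∧ ¬ R (g j) (g i) := by
  have hLstep : ∀ a b : ℕ, a < b → L (f b) (f a) := by
    intro a b hab
    induction b with
    | zero => omega
    | succ b ih =>
      rcases Nat.lt_succ_iff_lt_or_eq.mp hab with h | h
      · exact hLtrans (hf b) (ih h)
      · subst h; exact hf a
  have hnR : ∀ a b : ℕ, a < b → ¬ R (f a) (f b) := fun a b hab hR =>
    hLirr _ (hLtrans (hext _ _ hR) (hLstep a b hab))
  have hfinj : Function.Injective f := by
    intro a b hab
    by_contra hne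
    rcases Nat.lt_or_ge a b with h | h
    · exact hLirr (f b) (hab ▸ hLstep a b h)
    · have h' : b < a := lt_of_le_of_ne h (Ne.symm hne)
      exact hLirr (f a) (hab ▸ hLstep b a h')
  set S : Set ℕ := {m | ∀ m', m < m' → ¬ R (f m') (f m)} with hSdef
  by_cases hS : S.Infinite
  · let e := hS.natEmbedding
    refine ⟨fun n => f ((e n : ℕ)), ?_, fun n => ⟨(e n : ℕ), rfl⟩, ?_⟩
    · intro i j hij
      exact e.injective (Subtype.ext (hfinj hij))
    · intro i j hij
      have hab : ((e i : ℕ)) ≠ ((e j : ℕ)) := fun h => hij (e.injective (Subtype.ext h))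
      rcases Nat.lt_or_ge (e i : ℕ) (e j : ℕ) with h | h
      · exact ⟨hnR _ _ h, (e i).2 _ h⟩
      · have h' : (e j : ℕ) < (e i : ℕ) := lt_of_le_of_ne h (Ne.symm hab)
        exact ⟨(e j).2 _ h', hnR _ _ h'⟩
  · exfalso
    rw [Set.not_infinite] at hS
    obtain ⟨N, hN⟩ := hS.bddAbove
    have key : ∀ m, N < m → ∃ m', m < m' ∧ R (f m') (f m) := by
      intro m hm
      by_contra hcon
      push_neg at hcon
      have hmS : m ∈ S := fun m' hm' hR => hcon m' hm' hR
      exact absurd (hN hmS) (by omega)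
    choose nxt hnxt1 hnxt2 using key
    let u : ℕ → {m : ℕ // N < m} := fun k =>
      Nat.rec ⟨N + 1, Nat.lt_succ_self N⟩
        (fun _ p => ⟨nxt p.1 p.2, lt_trans p.2 (hnxt1 p.1 p.2)⟩) k
    have hu : ∀ k, R (f (u (k + 1)).1) (f (u k).1) := by
      intro k
      have heq : (u (k + 1)).1 = nxt (u k).1 (u k).2 := rfl
      rw [heq]
      exact hnxt2 (u k).1 (u k).2
    obtain ⟨x, ⟨k, hk⟩, hmin⟩ :=
      hwf.has_min (Set.range fun k => f (u k).1) ⟨_, ⟨0, rfl⟩⟩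
    exact hmin (f (u (k + 1)).1) ⟨k + 1, rfl⟩ (hk ▸ hu k)
end

section
/- Define the relation R₁ on ℕ by: m R₁ n iff n = 2m + 1 or n = 2m + 2, and let R be the transitive closure of R₁. Then the set {2^(n+2) − 3 : n ∈ ℕ} is an infinite totally unordered subset of ℕ under R: the map n ↦ 2^(n+2) − 3 is injective, and for distinct m, n, the elements 2^(m+2) − 3 and 2^(n+2) − 3 are R-incomparable. -/
lemma pow2_sub_one_div (i k : ℕ) : (2 ^ k - 1) / 2 ^ i = 2 ^ (k - i) - 1 := by
  induction i with
  | zero => simp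
  | succ i ih =>
    have h2 : (2 ^ (k - i) - 1) / 2 = 2 ^ (k - i - 1) - 1 := by
      rcases Nat.eq_zero_or_pos (k - i) with h | h
      · simp [h]
      · obtain ⟨s, hs⟩ : ∃ s, k - i = s + 1 := ⟨k - i - 1, by omega⟩
        rw [hs]
        have h1 : (2:ℕ) ^ (s + 1) = 2 * 2 ^ s := by ring
        have h3 : (1:ℕ) ≤ 2 ^ s := Nat.one_le_two_pow
        simp only [Nat.add_sub_cancel]
        omega
    calc (2 ^ k - 1) / 2 ^ (i + 1) = (2 ^ k - 1) / 2 ^ i / 2 := by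
          rw [Nat.div_div_eq_div_mul, pow_succ]
      _ = 2 ^ (k - i - 1) - 1 := by rw [ih, h2]
      _ = 2 ^ (k - (i + 1)) - 1 := by rw [Nat.sub_sub]

lemma tc_div (R₁ : ℕ → ℕ → Prop)
    (hR₁ : ∀ m n : ℕ, R₁ m n ↔ (n = 2 * m + 1 ∨ n = 2 * m + 2))
    {x y : ℕ} (h : Relation.TransGen R₁ x y) :
    ∃ j, 1 ≤ j ∧ (y + 1) / 2 ^ j = x + 1 := by
  induction h with
  | single h =>
    refine ⟨1, le_refl 1, ?_⟩
    rw [hR₁] at h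
    simp only [pow_one]
    omega
  | @tail b c _ h ih =>
    obtain ⟨j, hj, hdiv⟩ := ih
    rw [hR₁] at h
    refine ⟨j + 1, by omega, ?_⟩
    have he : (2:ℕ) ^ (j + 1) = 2 * 2 ^ j := by ring
    have hb : (c + 1) / 2 = b + 1 := by omega
    rw [he, ← Nat.div_div_eq_div_mul, hb]
    exact hdiv

lemma no_rel (R₁ : ℕ → ℕ → Prop)
    (hR₁ : ∀ m n : ℕ, R₁ m n ↔ (n = 2 * m + 1 ∨ n = 2 * m + 2)) (m n : ℕ) :
    ¬ Relation.TransGen R₁ (2 ^ (m + 2) - 3) (2 ^ (n + 2) - 3) := by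
  intro h
  obtain ⟨j, hj, hdiv⟩ := tc_div R₁ hR₁ h
  have hm : (4 : ℕ) ≤ 2 ^ (m + 2) := by
    calc (4:ℕ) = 2 ^ 2 := by norm_num
    _ ≤ 2 ^ (m + 2) := Nat.pow_le_pow_right (by norm_num) (by omega)
  have hn : (4 : ℕ) ≤ 2 ^ (n + 2) := by
    calc (4:ℕ) = 2 ^ 2 := by norm_num
    _ ≤ 2 ^ (n + 2) := Nat.pow_le_pow_right (by norm_num) (by omega)
  have h1 : (2 ^ (n + 2) - 3 + 1) = 2 * (2 ^ (n + 1) - 1) := by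
    have : 2 ^ (n + 2) = 2 * 2 ^ (n + 1) := by rw [pow_succ]; ring
    have : (2:ℕ) ≤ 2 ^ (n + 1) := Nat.one_lt_two_pow (by omega)
    omega
  obtain ⟨i, rfl⟩ : ∃ i, j = i + 1 := ⟨j - 1, by omega⟩
  have he : (2:ℕ) ^ (i + 1) = 2 * 2 ^ i := by ring
  rw [h1, he, Nat.mul_div_mul_left _ _ (by norm_num : 0 < 2),
    pow2_sub_one_div] at hdiv
  set t := n + 1 - i with ht
  rcases Nat.eq_zero_or_pos t with h0 | h0
  · rw [h0, pow_zero] at hdiv; omega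
  · obtain ⟨s, hs⟩ : ∃ s, t = s + 1 := ⟨t - 1, by omega⟩
    rw [hs] at hdiv
    have h2 : (2:ℕ) ^ (s + 1) = 2 * 2 ^ s := by ring
    have h3 : (1:ℕ) ≤ 2 ^ s := Nat.one_le_two_pow
    have h4 : 2 ^ (m + 2) = 2 * 2 ^ (m + 1) := by rw [pow_succ]; ring
    have h5 : (2:ℕ) ≤ 2 ^ (m + 1) := Nat.one_lt_two_pow (by omega)
    omega

/-- For the infinite binary tree order `R = TransGen R₁` on `ℕ`, the set
`{2^(n+2) - 3 : n ∈ ℕ}` is an infinite totally unordered subset: the map `n ↦ 2^(n+2) - 3`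
is injective and its values are pairwise `R`-incomparable. -/
theorem binary_tree_infinite_antichain
    (R₁ : ℕ → ℕ → Prop) (hR₁ : ∀ m n : ℕ, R₁ m n ↔ (n = 2 * m + 1 ∨ n = 2 * m + 2)) :
    Function.Injective (fun n : ℕ => 2 ^ (n + 2) - 3) ∧
      ∀ m n : ℕ, m ≠ n →
        2 ^ (m + 2) - 3 ≠ 2 ^ (n + 2) - 3 ∧
        ¬ Relation.TransGen R₁ (2 ^ (m + 2) - 3) (2 ^ (n + 2) - 3) ∧
        ¬ Relation.TransGen R₁ (2 ^ (n + 2) - 3) (2 ^ (m + 2) - 3) := by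
  have hinj : ∀ m n : ℕ, 2 ^ (m + 2) - 3 = 2 ^ (n + 2) - 3 → m = n := by
    intro m n h
    have hm : (4 : ℕ) ≤ 2 ^ (m + 2) := by
      calc (4:ℕ) = 2 ^ 2 := by norm_num
      _ ≤ 2 ^ (m + 2) := Nat.pow_le_pow_right (by norm_num) (by omega)
    have hn : (4 : ℕ) ≤ 2 ^ (n + 2) := by
      calc (4:ℕ) = 2 ^ 2 := by norm_num
      _ ≤ 2 ^ (n + 2) := Nat.pow_le_pow_right (by norm_num) (by omega)
    have : 2 ^ (m + 2) = 2 ^ (n + 2) := by omega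
    have := Nat.pow_right_injective (le_refl 2) this
    omega
  refine ⟨fun m n h => hinj m n h, fun m n hmn => ⟨fun h => hmn (hinj m n h),
    no_rel R₁ hR₁ m n, no_rel R₁ hR₁ n m⟩⟩
end
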